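/- arXiv:1704.09014 — 9 statements merged into one kernel-verified Lean document; each statement's English description precedes it below -/
import Mathlib

section
/- (No-future lemma.) Let ι be a finite type, m ≥ 1, and S_1, …, S_m subsets of ι; write U_i = S_1 ∪ ⋯ ∪ S_i. Let M_1, …, M_m be real ι×ι matrices such that for each i, (M_i) y x = 0 whenever x ∈ U_i and y ∉ U_i. If v : ι → ℝ satisfies v x = 0 for all x ∉ S_1, then the vector (exp(-M_m) * exp(-M_{m-1}) * ⋯ * exp(-M_1)).mulVec v vanishes at every x ∉ U_m. In particular, for a staged SSMC schedule H(t) = L_j + W on [j-1,j), where each Laplacian L_j is supported on the vertex set V(G_j) of a subgraph and W is diagonal, the process at time j has zero probability at any node outside ⋃_{i≤j} V(G_i). -/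
/-! The hypothesis on `M i` says that `M i`, hence `-M i`, is block triangular with respect to the
splitting `ι = U i ∪ (U i)ᶜ`. Block triangular matrices form a closed subalgebra, so
`exp (-M i)` is block triangular too and maps vectors supported in `U i` to vectors supported
in `U i`. As the `U i` increase, induction over the stages keeps the support of the evolved
vector inside the current `U i`. -/

open Matrix

namespace Matrix

variable {ι R : Type*}

theorem blockTriangular_notMem_iff [Zero R] {A : Matrix ι ι R} {U : Set ι} :
    A.BlockTriangular (· ∉ U) ↔ ∀ x y, x ∈ U → y ∉ U → A y x = 0 := by
  simp only [BlockTriangular, lt_iff_not_ge, le_Prop_eq, Classical.not_imp, not_not]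
  exact ⟨fun h x y hx hy => h ⟨hy, hx⟩, fun h y x hxy => h x y hxy.2 hxy.1⟩

theorem BlockTriangular.support_mulVec_subset [Fintype ι] [NonUnitalNonAssocSemiring R]
    {A : Matrix ι ι R} {U : Set ι} (hA : A.BlockTriangular (· ∉ U)) {v : ι → R}
    (hv : Function.support v ⊆ U) : Function.support (A *ᵥ v) ⊆ U := by
  rw [Function.support_subset_iff'] at hv ⊢
  intro y hy
  refine Finset.sum_eq_zero fun x _ => ?_
  by_cases hx : x ∈ U
  · simp [blockTriangular_notMem_iff.mp hA x y hx hy]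
  · simp [hv x hx]

theorem support_prod_mulVec_subset [Fintype ι] [DecidableEq ι] [Semiring R] {n : ℕ}
    (A : Fin (n + 1) → Matrix ι ι R) {U : Fin (n + 1) → Set ι} (hU : Monotone U)
    (hA : ∀ i, (A i).BlockTriangular (· ∉ U i)) {v : ι → R} (hv : Function.support v ⊆ U 0) :
    Function.support ((List.ofFn A).reverse.prod *ᵥ v) ⊆ U (Fin.last n) := by
  induction n with
  | zero => simpa using (hA 0).support_mulVec_subset hv
  | succ n ih =>
    rw [List.ofFn_succ', List.concat_eq_append, List.reverse_append, List.reverse_singleton,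
      List.singleton_append, List.prod_cons, ← mulVec_mulVec]
    have hinit := ih _ (hU.comp Fin.strictMono_castSucc.monotone) (fun _ => hA _) hv
    exact (hA _).support_mulVec_subset (hinit.trans (hU (Fin.le_last _)))

end Matrix

/-- No-future lemma: if each stage generator `M i` never moves mass out of the union
`U i = S 0 ∪ ⋯ ∪ S i` of the stage supports, then the staged semigroup
`exp(-M (m-1)) * ⋯ * exp(-M 0)` applied to a vector supported in `S 0` vanishes outside
the union of all the stage supports. -/
theorem ssmc_no_future {ι : Type*} [Fintype ι] [DecidableEq ι]
    (m : ℕ) (hm : 1 ≤ m) (S : Fin m → Set ι) (M : Fin m → Matrix ι ι ℝ)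
    (hM : ∀ i : Fin m, ∀ x y : ι,
      x ∈ ⋃ k ∈ Set.Iic i, S k → y ∉ ⋃ k ∈ Set.Iic i, S k → M i y x = 0)
    (v : ι → ℝ) (hv : ∀ x, x ∉ S ⟨0, hm⟩ → v x = 0) :
    ∀ x, x ∉ ⋃ k, S k →
      ((List.ofFn (fun i : Fin m => NormedSpace.exp (-(M i)))).reverse.prod).mulVec v x = 0 := by
  obtain ⟨n, rfl⟩ : ∃ n, m = n + 1 := ⟨m - 1, by omega⟩
  set U : Fin (n + 1) → Set ι := fun i => ⋃ k ∈ Set.Iic i, S k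
  have hU : Monotone U := fun i j hij =>
    Set.biUnion_subset_biUnion_left (Set.Iic_subset_Iic.mpr hij)
  have hexp i : (NormedSpace.exp (-(M i))).BlockTriangular (· ∉ U i) :=
    (blockTriangular_notMem_iff.mpr (hM i)).neg.exp
  have hv0 : Function.support v ⊆ U 0 :=
    (Function.support_subset_iff'.mpr hv).trans
      (Set.subset_biUnion_of_mem (u := S) (Set.mem_Iic.mpr le_rfl))
  have hUlast : U (Fin.last n) = ⋃ k, S k := by simp [U, Fin.le_last]
  rw [← hUlast, ← Function.support_subset_iff']
  exact support_prod_mulVec_subset _ hU hexp hv0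
end

section
/- Let E, w, t be real numbers with w > 0, and set μ = (E + 2w)/2 and Δ = √(E²/4 + w²). For the 2×2 matrix H = !![E + w, -w; -w, w], one has the exact closed form exp(-t•H) = e^{-μt} • ( cosh(Δt) • 1 - (sinh(Δt)/Δ) • (H - μ•1) ). In particular, the transition amplitudes from the first basis vector are (exp(-t•H))₀₀ = e^{-μt}·(cosh(Δt) - (E/(2Δ))·sinh(Δt)) and (exp(-t•H))₁₀ = e^{-μt}·(w/Δ)·sinh(Δt). -/
/-!
The trace-free part `K = H - μ • 1` of a `2 × 2` matrix squares to a scalar, `K * K = Δ ^ 2 • 1`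
(Cayley–Hamilton). Hence the even powers of `K` are scalars and the odd ones are multiples of `K`,
so the exponential series of `t • K` splits into the series of `cosh (t * Δ)` and of
`sinh (t * Δ) / Δ`. The scalar part `μ • 1` commutes with `K` and contributes the factor
`e^{-μt}`.
-/

open Matrix NormedSpace

section SquareIsScalar

variable {𝔸 : Type*} [Ring 𝔸] [Algebra ℝ 𝔸] {K : 𝔸} {δ : ℝ}

theorem pow_two_mul_of_mul_self_eq_sq_smul_one (hK : K * K = δ ^ 2 • (1 : 𝔸)) (n : ℕ) :
    K ^ (2 * n) = δ ^ (2 * n) • (1 : 𝔸) := by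
  rw [pow_mul, sq, hK, smul_pow, one_pow, ← pow_mul]

theorem pow_two_mul_add_one_of_mul_self_eq_sq_smul_one (hK : K * K = δ ^ 2 • (1 : 𝔸))
    (n : ℕ) : K ^ (2 * n + 1) = δ ^ (2 * n) • K := by
  rw [pow_succ, pow_two_mul_of_mul_self_eq_sq_smul_one hK, smul_one_mul]

theorem exp_smul_of_mul_self_eq_sq_smul_one [TopologicalSpace 𝔸] [IsTopologicalRing 𝔸]
    [ContinuousSMul ℝ 𝔸] [T2Space 𝔸] (hK : K * K = δ ^ 2 • (1 : 𝔸)) (hδ : δ ≠ 0) (t : ℝ) :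
    exp (t • K) = Real.cosh (t * δ) • (1 : 𝔸) + (Real.sinh (t * δ) / δ) • K := by
  have htK : t • K * t • K = (t * δ) ^ 2 • (1 : 𝔸) := by
    rw [smul_mul_smul, hK, smul_smul, mul_pow, sq t]
  rw [exp_eq_tsum ℝ]
  refine HasSum.tsum_eq (HasSum.even_add_odd ?_ ?_)
  · convert (Real.hasSum_cosh (t * δ)).smul_const (1 : 𝔸) using 2 with n
    rw [pow_two_mul_of_mul_self_eq_sq_smul_one htK, smul_smul, inv_mul_eq_div]
  · convert ((Real.hasSum_sinh (t * δ)).div_const δ).smul_const K using 2 with n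
    rw [pow_two_mul_add_one_of_mul_self_eq_sq_smul_one htK, smul_smul, smul_smul]
    congr 1
    field_simp
    ring

end SquareIsScalar

theorem Matrix.exp_smul_one_add {m : Type*} [Fintype m] [DecidableEq m] (c : ℝ)
    (B : Matrix m m ℝ) : exp (c • (1 : Matrix m m ℝ) + B) = Real.exp c • exp B := by
  rw [Matrix.exp_add_of_commute _ _ ((Commute.one_left B).smul_left c), smul_one_eq_diagonal,
    exp_diagonal, Pi.exp_def, ← Real.exp_eq_exp_ℝ, ← smul_one_eq_diagonal, smul_one_mul]

theorem Matrix.fin_two_sub_half_trace_mul_self {𝕜 : Type*} [Field 𝕜] [NeZero (2 : 𝕜)]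
    (a b c d : 𝕜) :
    (!![a, b; c, d] - ((a + d) / 2) • (1 : Matrix (Fin 2) (Fin 2) 𝕜)) *
        (!![a, b; c, d] - ((a + d) / 2) • (1 : Matrix (Fin 2) (Fin 2) 𝕜)) =
      (((a - d) / 2) ^ 2 + b * c) • (1 : Matrix (Fin 2) (Fin 2) 𝕜) := by
  have h2 : (2 : 𝕜) ≠ 0 := two_ne_zero
  ext i j
  fin_cases i <;> fin_cases j <;>
    simp only [Fin.zero_eta, Fin.mk_one, Fin.isValue, mul_apply, Fin.sum_univ_two, Matrix.sub_apply,
      Matrix.smul_apply, smul_eq_mul, one_apply_eq, one_apply_ne zero_ne_one, one_apply_ne one_ne_zero,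
      of_apply, cons_val', cons_val_zero, cons_val_one, cons_val_fin_one] <;>
    field_simp <;> ring

/-- Exact closed form for the SSMC semigroup on a single parent–child edge:
for `H = !![E + w, -w; -w, w]`, with `μ = (E + 2w)/2` and `Δ = √(E²/4 + w²)`,
`exp(-t•H) = e^{-μt} • (cosh(Δt)•1 - (sinh(Δt)/Δ)•(H - μ•1))`, and in particular
the transition amplitudes from the first basis vector are as displayed. -/
theorem ssmc_two_by_two_exact (E w t : ℝ) (hw : 0 < w) :
    letI H : Matrix (Fin 2) (Fin 2) ℝ := !![E + w, -w; -w, w]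
    letI μ : ℝ := (E + 2 * w) / 2
    letI Δ : ℝ := Real.sqrt (E ^ 2 / 4 + w ^ 2)
    NormedSpace.exp (-t • H)
        = Real.exp (-μ * t) •
          (Real.cosh (Δ * t) • (1 : Matrix (Fin 2) (Fin 2) ℝ)
            - (Real.sinh (Δ * t) / Δ) • (H - μ • (1 : Matrix (Fin 2) (Fin 2) ℝ))) ∧
      (NormedSpace.exp (-t • H)) 0 0
        = Real.exp (-μ * t) * (Real.cosh (Δ * t) - E / (2 * Δ) * Real.sinh (Δ * t)) ∧
      (NormedSpace.exp (-t • H)) 1 0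
        = Real.exp (-μ * t) * (w / Δ) * Real.sinh (Δ * t) := by
  set H : Matrix (Fin 2) (Fin 2) ℝ := !![E + w, -w; -w, w]
  set μ : ℝ := (E + 2 * w) / 2
  set Δ : ℝ := Real.sqrt (E ^ 2 / 4 + w ^ 2)
  have hΔ : 0 < Δ := Real.sqrt_pos.2 (by positivity)
  have hΔsq : Δ ^ 2 = E ^ 2 / 4 + w ^ 2 := Real.sq_sqrt (by positivity)
  set K := H - μ • (1 : Matrix (Fin 2) (Fin 2) ℝ)
  have hK : K * K = Δ ^ 2 • (1 : Matrix (Fin 2) (Fin 2) ℝ) := by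
    have h := Matrix.fin_two_sub_half_trace_mul_self (E + w) (-w) (-w) w
    rwa [show (E + w + w) / 2 = μ by ring,
      show ((E + w - w) / 2) ^ 2 + -w * -w = Δ ^ 2 by rw [hΔsq]; ring] at h
  have hsplit : -t • H = (-μ * t) • (1 : Matrix (Fin 2) (Fin 2) ℝ) + (-t) • K := by
    simp only [K]
    module
  have hexp : exp (-t • H) = Real.exp (-μ * t) •
      (Real.cosh (Δ * t) • (1 : Matrix (Fin 2) (Fin 2) ℝ) - (Real.sinh (Δ * t) / Δ) • K) := by
    rw [hsplit, Matrix.exp_smul_one_add, exp_smul_of_mul_self_eq_sq_smul_one hK hΔ.ne',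
      neg_mul, neg_mul t, Real.cosh_neg, Real.sinh_neg, neg_div, neg_smul, ← sub_eq_add_neg,
      mul_comm t Δ]
  refine ⟨hexp, ?_, ?_⟩
  all_goals
    simp only [hexp, K, H, μ, Matrix.smul_apply, Matrix.sub_apply, smul_eq_mul, one_apply_eq,
      one_apply_ne one_ne_zero, of_apply, cons_val', cons_val_zero, cons_val_one, cons_val_fin_one]
    field_simp
    ring
end

section
/- Fix w > 0 and t ∈ (0,1], and for E : ℝ let H_E = !![E + w, -w; -w, w]. Then, as E → ∞ along atTop: (i) the function E ↦ (exp(-t•H_E))₁₀ - (w/E)·e^{-wt} is O(E⁻²); and (ii) the function E ↦ (exp(-t•H_E))₀₀ is O(E⁻²). That is, the probability that the substochastic process starting at the parent x is at the child y at time t equals (w/E)e^{-wt} + O(1/E²), and the probability it remains at x is O(1/E²). -/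
/-!
The generator `H_E = !![E + w, -w; -w, w]` has eigenvalues `λ± = (E + 2w ± σ)/2` with
`σ = √(E² + 4w²)`, so `exp (-t H_E) = e^{-tλ₋} P + e^{-tλ₊} (1 - P)` for the spectral
projection `P` of `λ₋`. As `E → ∞`, `σ - E = 4w²/(σ + E) = O(1/E)`; hence `λ₋ = w + O(1/E)`,
`P₀₀ = (σ - E)/(2σ) = O(1/E²)` and `P₁₀ = w/σ = w/E + O(1/E²)`, while `λ₊ ≥ E + w` makes
`e^{-tλ₊}` decay faster than any power of `E`.
-/

open Matrix Asymptotics Filter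

open scoped Nat in
theorem IsIdempotentElem.exp_smul_add_smul_one_sub {𝔸 : Type*} [Ring 𝔸] [Algebra ℝ 𝔸]
    [TopologicalSpace 𝔸] [IsTopologicalRing 𝔸] [ContinuousSMul ℝ 𝔸] [T2Space 𝔸]
    {P : 𝔸} (hP : IsIdempotentElem P) (a b : ℝ) :
    NormedSpace.exp (a • P + b • (1 - P)) = Real.exp a • P + Real.exp b • (1 - P) := by
  have hpow (n : ℕ) : (a • P + b • (1 - P)) ^ n = a ^ n • P + b ^ n • (1 - P) := by
    induction n with
    | zero => simp
    | succ n ih =>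
      rw [pow_succ, ih]
      simp only [add_mul, mul_add, smul_mul_smul, hP.eq, hP.one_sub.eq, hP.mul_one_sub_self,
        hP.one_sub_mul_self, smul_zero, pow_succ]
      abel
  have hsum : HasSum (fun n : ℕ => (n !⁻¹ : ℝ) • (a • P + b • (1 - P)) ^ n)
      (Real.exp a • P + Real.exp b • (1 - P)) := by
    rw [Real.exp_eq_exp_ℝ]
    convert ((NormedSpace.expSeries_div_hasSum_exp a).smul_const P).add
      ((NormedSpace.expSeries_div_hasSum_exp b).smul_const (1 - P)) using 2 with n
    rw [hpow, smul_add, smul_smul, smul_smul, div_eq_inv_mul, div_eq_inv_mul]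
  rw [NormedSpace.exp_eq_tsum ℝ]
  exact hsum.tsum_eq

theorem Matrix.isIdempotentElem_of_trace_eq_one_of_det_eq_zero {R : Type*} [CommRing R]
    {P : Matrix (Fin 2) (Fin 2) R} (htr : P.trace = 1) (hdet : P.det = 0) :
    IsIdempotentElem P := by
  rw [trace_fin_two] at htr
  rw [det_fin_two] at hdet
  ext i j
  fin_cases i <;> fin_cases j <;> simp [mul_apply, Fin.sum_univ_two]
  · linear_combination P 0 0 * htr - hdet
  · linear_combination P 0 1 * htr
  · linear_combination P 1 0 * htr
  · linear_combination P 1 1 * htr - hdet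

theorem isLittleO_exp_neg_mul_inv_pow_atTop {a : ℝ} (ha : 0 < a) (k : ℕ) :
    (fun x : ℝ => Real.exp (-a * x)) =o[atTop] fun x => (x ^ k)⁻¹ := by
  refine (isLittleO_exp_neg_mul_rpow_atTop ha (-k)).congr' .rfl ?_
  filter_upwards [eventually_ge_atTop 0] with x hx
  rw [Real.rpow_neg hx, Real.rpow_natCast]

theorem Asymptotics.IsBigO.mul_inv_sq {l : Filter ℝ} {f g : ℝ → ℝ}
    (hf : f =O[l] fun x => x⁻¹) (hg : g =O[l] fun x => x⁻¹) :
    (fun x => f x * g x) =O[l] fun x => (x ^ 2)⁻¹ :=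
  (hf.mul hg).congr_right fun x => by rw [sq, mul_inv]

namespace SSMC

variable (w E : ℝ)

noncomputable def eigenGap : ℝ := √(E ^ 2 + 4 * w ^ 2)

noncomputable def lowerEigenvalue : ℝ := (E + 2 * w - eigenGap w E) / 2

noncomputable def upperEigenvalue : ℝ := (E + 2 * w + eigenGap w E) / 2

noncomputable def lowerEigenprojection : Matrix (Fin 2) (Fin 2) ℝ :=
  !![(eigenGap w E - E) / (2 * eigenGap w E), w / eigenGap w E;
     w / eigenGap w E, (eigenGap w E + E) / (2 * eigenGap w E)]

variable {w E}

theorem eigenGap_sq : eigenGap w E ^ 2 = E ^ 2 + 4 * w ^ 2 :=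
  Real.sq_sqrt (by positivity)

theorem le_eigenGap : E ≤ eigenGap w E :=
  (le_abs_self E).trans (Real.abs_le_sqrt (by nlinarith))

theorem eigenGap_pos (hE : 0 < E) : 0 < eigenGap w E :=
  hE.trans_le le_eigenGap

theorem isIdempotentElem_lowerEigenprojection (hE : 0 < E) :
    IsIdempotentElem (lowerEigenprojection w E) := by
  have hσ := (eigenGap_pos (w := w) hE).ne'
  apply isIdempotentElem_of_trace_eq_one_of_det_eq_zero
  · rw [lowerEigenprojection, trace_fin_two_of]
    field_simp
    ring
  · rw [lowerEigenprojection, det_fin_two_of]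
    field_simp
    linear_combination (eigenGap_sq (w := w) (E := E))

theorem generator_eq_spectral_decomposition (hE : 0 < E) :
    !![E + w, -w; -w, w] = lowerEigenvalue w E • lowerEigenprojection w E +
      upperEigenvalue w E • (1 - lowerEigenprojection w E) := by
  have hσ := (eigenGap_pos (w := w) hE).ne'
  rw [lowerEigenprojection, lowerEigenvalue, upperEigenvalue, one_fin_two]
  ext i j
  fin_cases i <;> fin_cases j <;> simp [field] <;> ring

theorem exp_neg_smul_generator (t : ℝ) (hE : 0 < E) :
    NormedSpace.exp (-t • !![E + w, -w; -w, w]) =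
      Real.exp (-t * lowerEigenvalue w E) • lowerEigenprojection w E +
        Real.exp (-t * upperEigenvalue w E) • (1 - lowerEigenprojection w E) := by
  rw [generator_eq_spectral_decomposition hE, smul_add, smul_smul, smul_smul,
    (isIdempotentElem_lowerEigenprojection hE).exp_smul_add_smul_one_sub]

variable (w)

theorem eigenGap_sub_isBigO : (fun E => eigenGap w E - E) =O[atTop] fun E => E⁻¹ := by
  refine .of_bound (2 * w ^ 2) ?_
  filter_upwards [eventually_gt_atTop 0] with E hE
  have hσ : E ≤ eigenGap w E := le_eigenGap
  rw [Real.norm_of_nonneg (sub_nonneg.2 hσ), norm_inv, Real.norm_of_nonneg hE.le,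
    ← div_eq_mul_inv, le_div_iff₀ hE]
  nlinarith [eigenGap_sq (w := w) (E := E)]

theorem inv_eigenGap_isBigO : (fun E => (eigenGap w E)⁻¹) =O[atTop] fun E => E⁻¹ := by
  refine .of_bound 1 ?_
  filter_upwards [eventually_gt_atTop 0] with E hE
  rw [one_mul, norm_inv, norm_inv, Real.norm_of_nonneg hE.le,
    Real.norm_of_nonneg (eigenGap_pos hE).le]
  exact inv_anti₀ hE le_eigenGap

theorem lowerEigenprojection_zero_zero_isBigO :
    (fun E => lowerEigenprojection w E 0 0) =O[atTop] fun E => (E ^ 2)⁻¹ := by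
  refine (((eigenGap_sub_isBigO w).mul_inv_sq (inv_eigenGap_isBigO w)).const_mul_left
    2⁻¹).congr_left fun E => ?_
  simp only [lowerEigenprojection, of_apply, cons_val', cons_val_zero, cons_val_fin_one]
  ring

theorem lowerEigenprojection_one_zero_isBigO :
    (fun E => lowerEigenprojection w E 1 0) =O[atTop] fun E => E⁻¹ :=
  ((inv_eigenGap_isBigO w).const_mul_left w).congr_left fun E => by
    simp [lowerEigenprojection, div_eq_mul_inv]

theorem lowerEigenprojection_one_zero_sub_isBigO :
    (fun E => lowerEigenprojection w E 1 0 - w * E⁻¹) =O[atTop] fun E => (E ^ 2)⁻¹ := by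
  -- `w/σ - w/E = -(w/E) (σ - E)/σ = -2w P₀₀ / E`
  refine (((lowerEigenprojection_zero_zero_isBigO w).mul
    (tendsto_inv_atTop_zero.isBigO_one ℝ)).const_mul_left (-2 * w)).congr' ?_ ?_
  · filter_upwards [eventually_gt_atTop 0] with E hE
    have hσ := (eigenGap_pos (w := w) hE).ne'
    simp only [lowerEigenprojection, of_apply, cons_val', cons_val_zero, cons_val_one,
      cons_val_fin_one]
    field_simp
    ring
  · exact .of_forall fun _ => mul_one _

theorem exp_neg_mul_lowerEigenvalue_sub_isBigO (t : ℝ) :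
    (fun E => Real.exp (-t * lowerEigenvalue w E) - Real.exp (-t * w)) =O[atTop]
      fun E => E⁻¹ := by
  have hlow : (fun E => lowerEigenvalue w E - w) =O[atTop] fun E => E⁻¹ :=
    ((eigenGap_sub_isBigO w).const_mul_left (-2⁻¹)).congr_left fun E => by
      rw [lowerEigenvalue]; ring
  have hlim : Tendsto (lowerEigenvalue w) atTop (nhds w) :=
    tendsto_sub_nhds_zero_iff.1 (hlow.trans_tendsto tendsto_inv_atTop_zero)
  have hderiv := ((hasDerivAt_id w).const_mul (-t)).exp
  exact (hderiv.isBigO_sub.comp_tendsto hlim).trans hlow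

theorem exp_neg_mul_upperEigenvalue_isBigO {t : ℝ} (ht : 0 < t) :
    (fun E => Real.exp (-t * upperEigenvalue w E)) =O[atTop] fun E => (E ^ 2)⁻¹ := by
  refine IsBigO.trans ?_ ((isLittleO_exp_neg_mul_inv_pow_atTop ht 2).isBigO.const_mul_left
    (Real.exp (-t * w)))
  refine .of_bound 1 (Eventually.of_forall fun E => ?_)
  rw [one_mul, Real.norm_of_nonneg (Real.exp_pos _).le, Real.norm_of_nonneg (by positivity),
    ← Real.exp_add]
  have := le_eigenGap (w := w) (E := E)
  gcongr
  rw [upperEigenvalue]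
  nlinarith

theorem exp_neg_mul_lowerEigenvalue_isBigO_one (t : ℝ) :
    (fun E => Real.exp (-t * lowerEigenvalue w E)) =O[atTop] fun _ => (1 : ℝ) := by
  simpa using ((exp_neg_mul_lowerEigenvalue_sub_isBigO w t).trans
    (tendsto_inv_atTop_zero.isBigO_one ℝ)).add
      (isBigO_const_const (Real.exp (-t * w)) one_ne_zero atTop)

end SSMC

open SSMC in
theorem ssmc_single_child_asymptotics_general (w t : ℝ) (ht : 0 < t) :
    letI H : ℝ → Matrix (Fin 2) (Fin 2) ℝ := fun E => !![E + w, -w; -w, w]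
    ((fun E : ℝ => (NormedSpace.exp (-t • H E)) 1 0 - w / E * Real.exp (-w * t))
        =O[atTop] fun E : ℝ => (E ^ 2)⁻¹) ∧
      ((fun E : ℝ => (NormedSpace.exp (-t • H E)) 0 0)
        =O[atTop] fun E : ℝ => (E ^ 2)⁻¹) := by
  have hu : (fun E : ℝ => E⁻¹) =O[atTop] fun _ => (1 : ℝ) := tendsto_inv_atTop_zero.isBigO_one ℝ
  have hsq : (fun E : ℝ => (E ^ 2)⁻¹) =O[atTop] fun _ => (1 : ℝ) :=
    (tendsto_inv_atTop_zero.comp (tendsto_pow_atTop two_ne_zero)).isBigO_one ℝ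
  have hA := exp_neg_mul_lowerEigenvalue_sub_isBigO w t
  have hB := exp_neg_mul_upperEigenvalue_isBigO w ht
  have hP00 := lowerEigenprojection_zero_zero_isBigO w
  have hP10 := lowerEigenprojection_one_zero_isBigO w
  constructor
  · have h := ((hA.mul_inv_sq hP10).sub
      ((hB.mul (hP10.trans hu)).congr_right fun _ => mul_one _)).add
        ((lowerEigenprojection_one_zero_sub_isBigO w).const_mul_left (Real.exp (-t * w)))
    refine h.congr' ?_ .rfl
    filter_upwards [eventually_gt_atTop 0] with E hE
    rw [exp_neg_smul_generator t hE, show -w * t = -t * w by ring]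
    simp only [Matrix.add_apply, Matrix.smul_apply, smul_eq_mul, Matrix.sub_apply,
      one_apply_ne one_ne_zero]
    ring
  · have h := (hP00.mul (exp_neg_mul_lowerEigenvalue_isBigO_one w t)).add
      (hB.mul ((isBigO_const_const 1 one_ne_zero atTop).sub (hP00.trans hsq)))
    refine (h.congr_right fun _ => mul_one _).congr' ?_ .rfl
    filter_upwards [eventually_gt_atTop 0] with E hE
    rw [exp_neg_smul_generator t hE]
    simp only [Matrix.add_apply, Matrix.smul_apply, smul_eq_mul, Matrix.sub_apply, one_apply_eq]
    ring

/-- Single-child case of Lemma 2: as `E → ∞`, the substochastic process started at the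
parent is at the child at time `t` with probability `(w/E)·e^{-wt} + O(1/E²)`, and remains
at the parent with probability `O(1/E²)`. -/
theorem ssmc_single_child_asymptotics (w t : ℝ) (hw : 0 < w) (ht : 0 < t) (ht1 : t ≤ 1) :
    letI H : ℝ → Matrix (Fin 2) (Fin 2) ℝ := fun E => !![E + w, -w; -w, w]
    ((fun E : ℝ => (NormedSpace.exp (-t • H E)) 1 0 - w / E * Real.exp (-w * t))
        =O[atTop] fun E : ℝ => (E ^ 2)⁻¹) ∧
      ((fun E : ℝ => (NormedSpace.exp (-t • H E)) 0 0)
        =O[atTop] fun E : ℝ => (E ^ 2)⁻¹) :=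
  ssmc_single_child_asymptotics_general w t ht
end

section
/- Fix d ≥ 1 and edge weights w_1, …, w_d > 0, and for E : ℝ let H_E be the (d+1)×(d+1) real matrix (indices 0,…,d) with (H_E)₀₀ = E + ∑_{j=1}^d w_j, (H_E)₀ⱼ = (H_E)ⱼ₀ = -w_j and (H_E)ⱼⱼ = w_j for 1 ≤ j ≤ d, and all other entries 0. Then, as E → ∞ along atTop: (i) for each j ∈ {1,…,d}, the function E ↦ (exp(-H_E))ⱼ₀ - (w_j/E)·e^{-w_j} is O(E⁻²); and (ii) the function E ↦ (exp(-H_E))₀₀ is O(E⁻²). That is, after unit time the probability of having moved from the parent x to its j-th child is (w_j/E)e^{-w_j} + O(1/E²) — independent of the number of children — and the probability of remaining at x is O(1/E²). -/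
open Matrix Asymptotics Filter

/-- The SSMC generator for a parent node (index `0`, with death rate `E`) connected to
`d` children (indices `1,…,d`) by edges of weights `w 0, …, w (d-1)`:
the star-graph Laplacian plus the diagonal objective. -/
noncomputable def ssmcStar (d : ℕ) (w : Fin d → ℝ) (E : ℝ) :
    Matrix (Fin (d + 1)) (Fin (d + 1)) ℝ :=
  Matrix.of fun y x =>
    Fin.cases
      (Fin.cases (E + ∑ j, w j) (fun j => -w j) x)
      (fun i => Fin.cases (-w i) (fun j => if i = j then w i else 0) x)
      y

/-!
Write `c = E + ∑ wⱼ`. The column `(f, g)` of `exp (-t H_E)` through the parent solves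
`f' = -c f + ∑ wⱼ gⱼ`, `gⱼ' = -wⱼ gⱼ + wⱼ f` with `f 0 = 1`, `gⱼ 0 = 0`, and variation of
constants turns each equation into an integral bound. The child equation gives
`|gⱼ t| ≤ wⱼ ∫₀¹ |f|` on `[0, 1]`, so the parent equation gives
`|f t - e^{-ct}| ≤ (∑ wⱼ²) (∫₀¹ |f|) / c`; integrating this over `[0, 1]` bounds `∫₀¹ |f|` by
`2 / c` once `c ≥ 2 ∑ wⱼ²`, hence `f t = e^{-ct} + O(1/c²)`. Feeding this into the child
equation, `gⱼ 1 = wⱼ (e^{-wⱼ} - e^{-c}) / (c - wⱼ) + O(1/c²) = (wⱼ / E) e^{-wⱼ} + O(1/E²)`.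
-/

open Real intervalIntegral Set

theorem integral_exp_mul {c : ℝ} (hc : c ≠ 0) (a b : ℝ) :
    ∫ s in a..b, exp (c * s) = (exp (c * b) - exp (c * a)) / c := by
  rw [integral_comp_mul_left (fun s => exp s) hc, integral_exp, smul_eq_mul, inv_mul_eq_div]

section LinearODE

variable {u h : ℝ → ℝ} {c t : ℝ}

theorem eq_exp_mul_mul_add_integral (hu : ∀ t, HasDerivAt u (-c * u t + h t) t)
    (hh : Continuous h) (t : ℝ) :
    u t = exp (-c * t) * (u 0 + ∫ s in 0..t, exp (c * s) * h s) := by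
  have hderiv : ∀ s, HasDerivAt (fun s => exp (c * s) * u s) (exp (c * s) * h s) s := fun s =>
    (((hasDerivAt_id s).const_mul c).exp.mul (hu s)).congr_deriv (by rw [id_eq, mul_one]; ring)
  rw [integral_eq_sub_of_hasDerivAt (fun s _ => hderiv s)
      (Continuous.intervalIntegrable (by fun_prop) _ _), mul_zero, exp_zero, one_mul,
    add_sub_cancel, ← mul_assoc, ← exp_add, neg_mul, neg_add_cancel, exp_zero, one_mul]

theorem abs_sub_exp_mul_mul_le_integral (hu : ∀ t, HasDerivAt u (-c * u t + h t) t)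
    (hh : Continuous h) (ht : 0 ≤ t) :
    |u t - exp (-c * t) * u 0| ≤ ∫ s in 0..t, exp (-c * (t - s)) * |h s| := by
  have hsplit : u t - exp (-c * t) * u 0 = ∫ s in 0..t, exp (-c * (t - s)) * h s := by
    rw [eq_exp_mul_mul_add_integral hu hh t, mul_add, add_sub_cancel_left, ← integral_const_mul]
    congr 1 with s
    rw [← mul_assoc, ← exp_add]
    ring_nf
  rw [hsplit]
  refine (abs_integral_le_integral_abs ht).trans_eq (integral_congr fun s _ => ?_)
  simp only [abs_mul, abs_exp]

theorem abs_sub_exp_mul_mul_le_integral_abs (hc : 0 ≤ c)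
    (hu : ∀ t, HasDerivAt u (-c * u t + h t) t) (hh : Continuous h) (ht : 0 ≤ t) :
    |u t - exp (-c * t) * u 0| ≤ ∫ s in 0..t, |h s| := by
  refine (abs_sub_exp_mul_mul_le_integral hu hh ht).trans
    (integral_mono_on ht (Continuous.intervalIntegrable (by fun_prop) _ _)
      (Continuous.intervalIntegrable (by fun_prop) _ _) fun s hs => ?_)
  have : exp (-c * (t - s)) ≤ 1 := exp_le_one_iff.2 (by nlinarith [hs.2])
  nlinarith [abs_nonneg (h s)]

theorem abs_sub_exp_mul_mul_le_div (hc : 0 < c)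
    (hu : ∀ t, HasDerivAt u (-c * u t + h t) t) (hh : Continuous h) (ht : 0 ≤ t) {M : ℝ}
    (hM : ∀ s ∈ Icc 0 t, |h s| ≤ M) :
    |u t - exp (-c * t) * u 0| ≤ M / c := by
  have hM0 : 0 ≤ M := (abs_nonneg _).trans (hM 0 ⟨le_rfl, ht⟩)
  calc |u t - exp (-c * t) * u 0| ≤ ∫ s in 0..t, exp (-c * (t - s)) * |h s| :=
        abs_sub_exp_mul_mul_le_integral hu hh ht
    _ ≤ ∫ s in 0..t, M * (exp (-c * t) * exp (c * s)) := by
        refine integral_mono_on ht (Continuous.intervalIntegrable (by fun_prop) _ _)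
          (Continuous.intervalIntegrable (by fun_prop) _ _) fun s hs => ?_
        rw [← exp_add, mul_comm M]
        ring_nf
        exact mul_le_mul_of_nonneg_left (hM s hs) (exp_pos _).le
    _ = M / c * (1 - exp (-c * t)) := by
        rw [integral_const_mul, integral_const_mul, integral_exp_mul hc.ne', mul_zero, exp_zero,
          mul_div_assoc', mul_sub, ← exp_add, neg_mul, neg_add_cancel, exp_zero]
        field_simp
    _ ≤ M / c := mul_le_of_le_one_right (by positivity) (by linarith [exp_pos (-c * t)])

end LinearODE

theorem exp_neg_le_inv {x : ℝ} (hx : 0 < x) : exp (-x) ≤ x⁻¹ := by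
  rw [exp_neg]
  exact inv_anti₀ hx (by linarith [add_one_le_exp x])

theorem exp_neg_le_two_div_sq {x : ℝ} (hx : 0 < x) : exp (-x) ≤ 2 / x ^ 2 := by
  rw [exp_neg, ← inv_div]
  exact inv_anti₀ (by positivity) (by linarith [quadratic_le_exp_of_nonneg hx.le, sq_nonneg x])

theorem hasDerivAt_exp_sub_exp_div {a b : ℝ} (hab : a ≠ b) (t : ℝ) :
    HasDerivAt (fun t => (exp (-a * t) - exp (-b * t)) / (b - a))
      (-a * ((exp (-a * t) - exp (-b * t)) / (b - a)) + exp (-b * t)) t := by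
  have hba : b - a ≠ 0 := sub_ne_zero.2 hab.symm
  refine ((((hasDerivAt_id t).const_mul (-a)).exp.sub
    ((hasDerivAt_id t).const_mul (-b)).exp).div_const (b - a)).congr_deriv ?_
  simp only [id]
  field_simp
  ring

theorem abs_exp_sub_exp_div_sub_le {w S E : ℝ} (hw : 0 ≤ w) (hwS : w ≤ S) (hE : 0 < E) :
    |(exp (-w) - exp (-(E + S))) / (E + S - w) - exp (-w) / E| ≤ (S + 1) / E ^ 2 := by
  set a := E + S - w
  have hEa : E ≤ a := by linarith
  have ha0 : 0 < a := hE.trans_le hEa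
  have hsplit : (exp (-w) - exp (-(E + S))) / a - exp (-w) / E
      = -(exp (-w) * ((a - E) / (a * E))) - exp (-(E + S)) / a := by
    field_simp
    ring
  have hmain : exp (-w) * ((a - E) / (a * E)) ≤ S / E ^ 2 := by
    have h1 : exp (-w) ≤ 1 := exp_le_one_iff.2 (by linarith)
    have h2 : (a - E) / (a * E) ≤ S / E ^ 2 := by
      rw [div_le_div_iff₀ (by positivity) (by positivity)]
      calc (a - E) * E ^ 2 ≤ (a - E) * (a * E) := by
            gcongr
            nlinarith
        _ ≤ S * (a * E) := by gcongr; linarith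
    have h3 : 0 ≤ (a - E) / (a * E) := div_nonneg (by linarith) (by positivity)
    nlinarith [exp_pos (-w)]
  have htail : exp (-(E + S)) / a ≤ 1 / E ^ 2 := by
    calc exp (-(E + S)) / a ≤ E⁻¹ / E := by
          gcongr
          exact (exp_le_exp.2 (by linarith)).trans (exp_neg_le_inv hE)
      _ = 1 / E ^ 2 := by field_simp
  rw [hsplit, add_div]
  refine (abs_sub _ _).trans ?_
  rw [abs_neg, abs_of_nonneg (by positivity), abs_of_nonneg (by positivity)]
  linarith

/-- `f t` and `g j t` are the masses at the parent and at child `j` after time `t` of the flow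
`exp (-t H_E)` started from a unit mass at the parent. -/
structure IsStarFlow {d : ℕ} (w : Fin d → ℝ) (E : ℝ) (f : ℝ → ℝ) (g : Fin d → ℝ → ℝ) :
    Prop where
  hasDerivAt_parent : ∀ t, HasDerivAt f (-(E + ∑ j, w j) * f t + ∑ j, w j * g j t) t
  hasDerivAt_child : ∀ j t, HasDerivAt (g j) (-w j * g j t + w j * f t) t
  parent_zero : f 0 = 1
  child_zero : ∀ j, g j 0 = 0

namespace IsStarFlow

variable {d : ℕ} {w : Fin d → ℝ} {E : ℝ} {f : ℝ → ℝ} {g : Fin d → ℝ → ℝ}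

theorem continuous_parent (hF : IsStarFlow w E f g) : Continuous f :=
  continuous_iff_continuousAt.2 fun t => (hF.hasDerivAt_parent t).continuousAt

theorem continuous_child (hF : IsStarFlow w E f g) (j : Fin d) : Continuous (g j) :=
  continuous_iff_continuousAt.2 fun t => (hF.hasDerivAt_child j t).continuousAt

theorem abs_child_le (hF : IsStarFlow w E f g) (hw : ∀ j, 0 ≤ w j) (j : Fin d) {t : ℝ}
    (ht : 0 ≤ t) : |g j t| ≤ w j * ∫ s in 0..t, |f s| := by
  simpa only [hF.child_zero, mul_zero, sub_zero, abs_mul, abs_of_nonneg (hw j),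
    integral_const_mul] using abs_sub_exp_mul_mul_le_integral_abs (hw j)
      (hF.hasDerivAt_child j) (continuous_const.mul hF.continuous_parent) ht

theorem abs_parent_sub_exp_le (hF : IsStarFlow w E f g) (hc : 0 < E + ∑ j, w j) {t M : ℝ}
    (ht : 0 ≤ t) (hM : ∀ s ∈ Icc 0 t, |∑ j, w j * g j s| ≤ M) :
    |f t - exp (-(E + ∑ j, w j) * t)| ≤ M / (E + ∑ j, w j) := by
  simpa only [hF.parent_zero, mul_one] using abs_sub_exp_mul_mul_le_div hc hF.hasDerivAt_parent
    (continuous_finsetSum _ fun j _ => continuous_const.mul (hF.continuous_child j)) ht hM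

theorem abs_sum_mul_child_le (hF : IsStarFlow w E f g) (hw : ∀ j, 0 ≤ w j) {s : ℝ}
    (hs : s ∈ Icc (0 : ℝ) 1) :
    |∑ j, w j * g j s| ≤ (∑ j, w j ^ 2) * ∫ r in 0..1, |f r| := by
  have hmono : ∫ r in 0..s, |f r| ≤ ∫ r in 0..1, |f r| :=
    integral_mono_interval le_rfl hs.1 hs.2 (Eventually.of_forall fun _ => abs_nonneg _)
      (hF.continuous_parent.abs.intervalIntegrable _ _)
  calc |∑ j, w j * g j s| ≤ ∑ j, w j * |g j s| :=
        (Finset.abs_sum_le_sum_abs _ _).trans_eq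
          (Finset.sum_congr rfl fun j _ => by rw [abs_mul, abs_of_nonneg (hw j)])
    _ ≤ ∑ j, w j * (w j * ∫ r in 0..1, |f r|) := Finset.sum_le_sum fun j _ =>
        mul_le_mul_of_nonneg_left
          ((hF.abs_child_le hw j hs.1).trans (mul_le_mul_of_nonneg_left hmono (hw j))) (hw j)
    _ = (∑ j, w j ^ 2) * ∫ r in 0..1, |f r| := by
        rw [Finset.sum_mul]
        exact Finset.sum_congr rfl fun j _ => by ring

theorem integral_abs_parent_le (hF : IsStarFlow w E f g) (hw : ∀ j, 0 ≤ w j) (hE : 0 < E)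
    (hWE : 2 * ∑ j, w j ^ 2 ≤ E) : ∫ s in 0..1, |f s| ≤ 2 / (E + ∑ j, w j) := by
  set c := E + ∑ j, w j
  set W := ∑ j, w j ^ 2
  set m := ∫ s in 0..1, |f s|
  have hc : 0 < c := add_pos_of_pos_of_nonneg hE (Finset.sum_nonneg fun j _ => hw j)
  have hcE : E ≤ c := le_add_of_nonneg_right (Finset.sum_nonneg fun j _ => hw j)
  have hm : 0 ≤ m := integral_nonneg zero_le_one fun _ _ => abs_nonneg _
  have hpointwise : ∀ s ∈ Icc (0 : ℝ) 1, |f s| ≤ exp (-c * s) + W * m / c := fun s hs => by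
    have h := hF.abs_parent_sub_exp_le hc hs.1 fun r hr =>
      hF.abs_sum_mul_child_le hw ⟨hr.1, hr.2.trans hs.2⟩
    have := abs_sub_abs_le_abs_sub (f s) (exp (-c * s))
    rw [abs_exp] at this
    linarith
  -- `m` appears on both sides; `W / c ≤ 1 / 2` lets the right-hand occurrence be absorbed.
  have hbootstrap : m ≤ 1 / c + W * m / c :=
    calc m ≤ ∫ s in 0..1, (exp (-c * s) + W * m / c) :=
          integral_mono_on zero_le_one (hF.continuous_parent.abs.intervalIntegrable _ _)
            (Continuous.intervalIntegrable (by fun_prop) _ _) hpointwise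
      _ = (1 - exp (-c)) / c + W * m / c := by
          rw [integral_add (Continuous.intervalIntegrable (by fun_prop) _ _)
              intervalIntegrable_const, integral_exp_mul (neg_ne_zero.2 hc.ne'), integral_const]
          simp only [mul_one, mul_zero, exp_zero, sub_zero, one_smul, div_neg, ← neg_div, neg_sub]
      _ ≤ 1 / c + W * m / c := by gcongr; linarith [exp_pos (-c)]
  have hhalf : W * m / c ≤ m / 2 := by
    rw [div_le_iff₀ hc]
    nlinarith
  calc m ≤ 2 * (1 / c) := by linarith
    _ = 2 / c := by ring

theorem abs_parent_sub_exp_le_sq (hF : IsStarFlow w E f g) (hw : ∀ j, 0 ≤ w j) (hE : 0 < E)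
    (hWE : 2 * ∑ j, w j ^ 2 ≤ E) {t : ℝ} (ht : t ∈ Icc (0 : ℝ) 1) :
    |f t - exp (-(E + ∑ j, w j) * t)| ≤ 2 * (∑ j, w j ^ 2) / (E + ∑ j, w j) ^ 2 := by
  have hc : 0 < E + ∑ j, w j := add_pos_of_pos_of_nonneg hE (Finset.sum_nonneg fun j _ => hw j)
  have hW : 0 ≤ ∑ j, w j ^ 2 := Finset.sum_nonneg fun j _ => sq_nonneg _
  convert hF.abs_parent_sub_exp_le hc ht.1 fun s hs =>
    (hF.abs_sum_mul_child_le hw ⟨hs.1, hs.2.trans ht.2⟩).trans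
      (mul_le_mul_of_nonneg_left (hF.integral_abs_parent_le hw hE hWE) hW) using 1
  field_simp

theorem abs_parent_one_le (hF : IsStarFlow w E f g) (hw : ∀ j, 0 ≤ w j) (hE : 0 < E)
    (hWE : 2 * ∑ j, w j ^ 2 ≤ E) : |f 1| ≤ 2 * (1 + ∑ j, w j ^ 2) / E ^ 2 := by
  have hcE : E ≤ E + ∑ j, w j := le_add_of_nonneg_right (Finset.sum_nonneg fun j _ => hw j)
  have hW : 0 ≤ ∑ j, w j ^ 2 := Finset.sum_nonneg fun j _ => sq_nonneg _
  have hrem := hF.abs_parent_sub_exp_le_sq hw hE hWE ⟨zero_le_one, le_rfl⟩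
  have hexp : exp (-(E + ∑ j, w j) * 1) ≤ 2 / E ^ 2 := by
    rw [mul_one]
    exact (exp_le_exp.2 (neg_le_neg hcE)).trans (exp_neg_le_two_div_sq hE)
  have hsq : 2 * (∑ j, w j ^ 2) / (E + ∑ j, w j) ^ 2 ≤ 2 * (∑ j, w j ^ 2) / E ^ 2 := by
    gcongr
  have := abs_sub_abs_le_abs_sub (f 1) (exp (-(E + ∑ j, w j) * 1))
  rw [abs_exp] at this
  rw [mul_add, add_div]
  linarith

theorem abs_child_sub_le (hF : IsStarFlow w E f g) (hw : ∀ j, 0 ≤ w j) (hE : 0 < E)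
    (hWE : 2 * ∑ j, w j ^ 2 ≤ E) (j : Fin d) :
    |g j 1 - w j * ((exp (-w j) - exp (-(E + ∑ i, w i))) / (E + ∑ i, w i - w j))|
      ≤ w j * (2 * (∑ i, w i ^ 2) / (E + ∑ i, w i) ^ 2) := by
  set c := E + ∑ i, w i
  have hwc : w j < c := by
    linarith [Finset.single_le_sum (fun i _ => hw i) (Finset.mem_univ j)]
  -- `φ` solves the child equation with the parent mass replaced by its leading term `e^{-ct}`.
  set φ : ℝ → ℝ := fun t => (exp (-w j * t) - exp (-c * t)) / (c - w j)
  have hu : ∀ t, HasDerivAt (fun t => g j t - w j * φ t)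
      (-w j * (g j t - w j * φ t) + w j * (f t - exp (-c * t))) t := fun t =>
    ((hF.hasDerivAt_child j t).sub
      ((hasDerivAt_exp_sub_exp_div hwc.ne t).const_mul (w j))).congr_deriv (by ring)
  have h := abs_sub_exp_mul_mul_le_integral_abs (hw j) hu
    (continuous_const.mul (hF.continuous_parent.sub (by fun_prop))) zero_le_one
  have hbound : ∫ s in 0..1, |w j * (f s - exp (-c * s))|
      ≤ ∫ s in 0..1, w j * (2 * (∑ i, w i ^ 2) / c ^ 2) :=
    integral_mono_on zero_le_one
      ((continuous_const.mul (hF.continuous_parent.sub (by fun_prop))).abs.intervalIntegrable _ _)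
      intervalIntegrable_const fun s hs => by
        rw [abs_mul, abs_of_nonneg (hw j)]
        exact mul_le_mul_of_nonneg_left (hF.abs_parent_sub_exp_le_sq hw hE hWE hs) (hw j)
  simp only [hF.child_zero, φ, mul_zero, mul_one, sub_self, zero_div, sub_zero] at h
  simpa only [integral_const, sub_zero, one_smul] using h.trans hbound

theorem abs_child_one_sub_le (hF : IsStarFlow w E f g) (hw : ∀ j, 0 ≤ w j) (hE : 0 < E)
    (hWE : 2 * ∑ j, w j ^ 2 ≤ E) (j : Fin d) :
    |g j 1 - w j / E * exp (-w j)| ≤ w j * (∑ i, w i + 1 + 2 * ∑ i, w i ^ 2) / E ^ 2 := by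
  have hrem := hF.abs_child_sub_le hw hE hWE j
  have hlead := abs_exp_sub_exp_div_sub_le (hw j)
    (Finset.single_le_sum (fun i _ => hw i) (Finset.mem_univ j)) hE
  have hsq : 2 * (∑ i, w i ^ 2) / (E + ∑ i, w i) ^ 2 ≤ 2 * (∑ i, w i ^ 2) / E ^ 2 := by
    gcongr
    exact le_add_of_nonneg_right (Finset.sum_nonneg fun i _ => hw i)
  calc |g j 1 - w j / E * exp (-w j)|
      ≤ |g j 1 - w j * ((exp (-w j) - exp (-(E + ∑ i, w i))) / (E + ∑ i, w i - w j))|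
        + w j * |(exp (-w j) - exp (-(E + ∑ i, w i))) / (E + ∑ i, w i - w j)
          - exp (-w j) / E| := by
        rw [← abs_of_nonneg (hw j), ← abs_mul, abs_of_nonneg (hw j)]
        refine (abs_sub_le _ (w j * ((exp (-w j) - exp (-(E + ∑ i, w i))) /
          (E + ∑ i, w i - w j))) _).trans_eq ?_
        congr 2
        ring
    _ ≤ w j * (2 * (∑ i, w i ^ 2) / E ^ 2) + w j * ((∑ i, w i + 1) / E ^ 2) := by
        gcongr
        · exact hrem.trans (mul_le_mul_of_nonneg_left hsq (hw j))
        · exact hw j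
    _ = w j * (∑ i, w i + 1 + 2 * ∑ i, w i ^ 2) / E ^ 2 := by ring

end IsStarFlow

theorem Matrix.hasDerivAt_exp_smul_apply {m : Type*} [Fintype m] [DecidableEq m]
    (A : Matrix m m ℝ) (i j : m) (t : ℝ) :
    HasDerivAt (fun t : ℝ => NormedSpace.exp (t • A) i j)
      ((A * NormedSpace.exp (t • A)) i j) t := by
  -- `Matrix` has no global norm; any normed algebra structure inducing its topology will do.
  let _ : NormedRing (Matrix m m ℝ) := Matrix.linftyOpNormedRing
  let _ : NormedAlgebra ℝ (Matrix m m ℝ) := Matrix.linftyOpNormedAlgebra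
  exact hasDerivAt_pi.1 (hasDerivAt_pi.1 (hasDerivAt_exp_smul_const' A t) i) j

section ssmcStar

variable {d : ℕ} (w : Fin d → ℝ) (E : ℝ)

@[simp] theorem ssmcStar_zero_zero : ssmcStar d w E 0 0 = E + ∑ j, w j := rfl

@[simp] theorem ssmcStar_zero_succ (j : Fin d) : ssmcStar d w E 0 j.succ = -w j := rfl

@[simp] theorem ssmcStar_succ_zero (i : Fin d) : ssmcStar d w E i.succ 0 = -w i := rfl

@[simp] theorem ssmcStar_succ_succ (i j : Fin d) :
    ssmcStar d w E i.succ j.succ = if i = j then w i else 0 := rfl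

theorem isStarFlow_exp_smul_neg_ssmcStar :
    IsStarFlow w E (fun t => NormedSpace.exp (t • -ssmcStar d w E) 0 0)
      (fun j t => NormedSpace.exp (t • -ssmcStar d w E) j.succ 0) where
  hasDerivAt_parent t := by
    convert Matrix.hasDerivAt_exp_smul_apply (-ssmcStar d w E) 0 0 t using 1
    simp only [smul_neg, Matrix.mul_apply, Matrix.neg_apply, Fin.sum_univ_succ,
      ssmcStar_zero_zero, ssmcStar_zero_succ, neg_mul, Finset.sum_neg_distrib]
    ring
  hasDerivAt_child j t := by
    convert Matrix.hasDerivAt_exp_smul_apply (-ssmcStar d w E) j.succ 0 t using 1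
    simp [Matrix.mul_apply, Fin.sum_univ_succ]
  parent_zero := by simp
  child_zero j := by simp

end ssmcStar

theorem ssmc_multi_child_asymptotics_general (d : ℕ) (w : Fin d → ℝ)
    (hw : ∀ j, 0 < w j) :
    (∀ j : Fin d,
      (fun E : ℝ => (NormedSpace.exp (-(ssmcStar d w E))) j.succ 0
          - w j / E * Real.exp (-w j))
        =O[atTop] fun E : ℝ => (E ^ 2)⁻¹) ∧
    ((fun E : ℝ => (NormedSpace.exp (-(ssmcStar d w E))) 0 0)
        =O[atTop] fun E : ℝ => (E ^ 2)⁻¹) := by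
  have hw' : ∀ j, 0 ≤ w j := fun j => (hw j).le
  have hlarge : ∀ᶠ E in atTop, 0 < E ∧ 2 * ∑ j, w j ^ 2 ≤ E :=
    (eventually_gt_atTop 0).and (eventually_ge_atTop _)
  have hnorm : ∀ {E : ℝ}, 0 < E → ‖(E ^ 2)⁻¹‖ = 1 / E ^ 2 := fun hE => by
    rw [norm_inv, norm_pow, Real.norm_of_nonneg hE.le, one_div]
  have hexp : ∀ E, NormedSpace.exp (-ssmcStar d w E)
      = NormedSpace.exp ((1 : ℝ) • -ssmcStar d w E) := fun E => by rw [one_smul]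
  refine ⟨fun j => IsBigO.of_bound (w j * (∑ i, w i + 1 + 2 * ∑ i, w i ^ 2)) ?_,
    IsBigO.of_bound (2 * (1 + ∑ j, w j ^ 2)) ?_⟩
  · filter_upwards [hlarge] with E ⟨hE, hWE⟩
    rw [hnorm hE, Real.norm_eq_abs, mul_one_div, hexp]
    exact (isStarFlow_exp_smul_neg_ssmcStar w E).abs_child_one_sub_le hw' hE hWE j
  · filter_upwards [hlarge] with E ⟨hE, hWE⟩
    rw [hnorm hE, Real.norm_eq_abs, mul_one_div, hexp]
    exact (isStarFlow_exp_smul_neg_ssmcStar w E).abs_parent_one_le hw' hE hWE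

/-- Multi-child case of Lemma 2 at `t = 1`: as `E → ∞`, the probability of having moved
from the parent to its `j`-th child after unit time is `(w j / E)·e^{-w j} + O(1/E²)` —
independent of the number of children — and the probability of remaining at the parent
is `O(1/E²)`. -/
theorem ssmc_multi_child_asymptotics (d : ℕ) (hd : 1 ≤ d) (w : Fin d → ℝ)
    (hw : ∀ j, 0 < w j) :
    (∀ j : Fin d,
      (fun E : ℝ => (NormedSpace.exp (-(ssmcStar d w E))) j.succ 0
          - w j / E * Real.exp (-w j))
        =O[atTop] fun E : ℝ => (E ^ 2)⁻¹) ∧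
    ((fun E : ℝ => (NormedSpace.exp (-(ssmcStar d w E))) 0 0)
        =O[atTop] fun E : ℝ => (E ^ 2)⁻¹) :=
  ssmc_multi_child_asymptotics_general d w hw
end

section
/- Let V be a finite type with depth function d : V → ℕ, a unique root r with d r = 0, a parent map par : V → V with d (par y) = d y - 1 whenever d y ≥ 1, and maximal depth D such that {v | d v = j} is nonempty for every j ≤ D. Define p : ℕ → V → ℝ by p 0 v = (1 if d v = 0 else 0) and, for each j, p (j+1) y = p j (par y) / (∑_{y' : d y' = j+1} p j (par y')) if d y = j+1, and p (j+1) y = 0 otherwise. Then for every j ≤ D and every y with d y = j, p j y = 1 / card {v | d v = j}; i.e., the limiting discrete process with equal edge weights is uniform on each depth layer. -/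
variable {V : Type*} [Fintype V] [DecidableEq V]

/-- The limiting discrete process for a search tree with equal edge weights:
`p 0` is the indicator of depth `0`, and `p (j+1)` is supported on layer `j+1`,
proportional to `p j (par y)`. -/
noncomputable def uniformLimit (d : V → ℕ) (par : V → V) : ℕ → V → ℝ
  | 0 => fun v => if d v = 0 then 1 else 0
  | j + 1 => fun y =>
      if d y = j + 1 then
        uniformLimit d par j (par y) /
          ∑ y' ∈ Finset.univ.filter (fun y' => d y' = j + 1), uniformLimit d par j (par y')
      else 0

/-! Induction on the depth: the root layer is a singleton, and a constant nonzero value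
on the parents of layer `j + 1` cancels out of the normalisation. -/

open Finset

omit [DecidableEq V] in
theorem uniformLimit_zero_of_depth_eq_zero {d : V → ℕ} {r : V} (par : V → V)
    (hroot_unique : ∀ v, d v = 0 → v = r) {y : V} (hy : d y = 0) :
    uniformLimit d par 0 y = 1 / (#{v | d v = 0} : ℝ) := by
  have hlayer : ({v | d v = 0} : Finset V) = {y} := by
    ext v
    simp only [mem_filter, mem_univ, true_and, mem_singleton]
    exact ⟨fun hv => (hroot_unique v hv).trans (hroot_unique y hy).symm, fun h => h ▸ hy⟩
  simp [uniformLimit, hy, hlayer]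

omit [DecidableEq V] in
theorem uniformLimit_succ_of_parent_const {d : V → ℕ} {par : V → V} {j : ℕ} {c : ℝ}
    (hc : c ≠ 0) (hconst : ∀ y, d y = j + 1 → uniformLimit d par j (par y) = c)
    {y : V} (hy : d y = j + 1) :
    uniformLimit d par (j + 1) y = 1 / (#{v | d v = j + 1} : ℝ) := by
  have hsum : ∑ y' ∈ {v | d v = j + 1}, uniformLimit d par j (par y')
      = #{v | d v = j + 1} * c := by
    rw [sum_congr rfl fun y' hy' => hconst y' (mem_filter.mp hy').2, sum_const, nsmul_eq_mul]
  rw [uniformLimit]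
  beta_reduce
  rw [if_pos hy, hsum, hconst y hy]
  field_simp

theorem uniformLimit_eq_uniform_general (d : V → ℕ) (r : V) (par : V → V) (D : ℕ)
    (hroot_unique : ∀ v, d v = 0 → v = r)
    (hpar : ∀ y, 1 ≤ d y → d (par y) = d y - 1) :
    ∀ j ≤ D, ∀ y, d y = j →
      uniformLimit d par j y = 1 / ((Finset.univ.filter (fun v => d v = j)).card : ℝ) := by
  rintro j -
  induction j with
  | zero => exact fun y => uniformLimit_zero_of_depth_eq_zero par hroot_unique
  | succ j ih =>
    have hpar_depth : ∀ y, d y = j + 1 → d (par y) = j := fun y hy => by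
      have := hpar y (by omega)
      omega
    intro y hy
    refine uniformLimit_succ_of_parent_const ?_ (fun y' hy' => ih _ (hpar_depth y' hy')) hy
    have hmem : par y ∈ ({v | d v = j} : Finset V) := by simpa using hpar_depth y hy
    simpa using card_ne_zero_of_mem hmem

/-- Corollary to Theorem 3: on a search tree with depth function `d`, unique root `r`,
parent map `par`, and maximal depth `D`, the limiting discrete process with equal edge
weights is uniform on each depth layer. -/
theorem uniformLimit_eq_uniform (d : V → ℕ) (r : V) (par : V → V) (D : ℕ)
    (hroot : d r = 0) (hroot_unique : ∀ v, d v = 0 → v = r)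
    (hpar : ∀ y, 1 ≤ d y → d (par y) = d y - 1)
    (hD : ∀ j ≤ D, ∃ v, d v = j) :
    ∀ j ≤ D, ∀ y, d y = j →
      uniformLimit d par j y = 1 / ((Finset.univ.filter (fun v => d v = j)).card : ℝ) :=
  uniformLimit_eq_uniform_general d r par D hroot_unique hpar
end

section
/- (GWW variant fails on the long-teeth comb.) Fix N ≥ 1 and D ≥ 1. Under the uniform probability measure on functions f : Fin N → (Fin D → Bool), the probability of the event {f | ∃ i, ∀ k, f i k = true} equals 1 - (1 - 2^{-D})^N, which is at most N / 2^D. -/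
/-!
The `N` walkers are independent, and a single walker misses the spine with probability
`1 - 2^{-D}`, so all of them miss it with probability `(1 - 2^{-D})^N`. Bernoulli's inequality
`(1 - x)^N ≥ 1 - N x` then gives the union bound `N / 2^D`.
-/

open Finset

section UniformFunctions

variable {α β : Type*} [Fintype α] [Fintype β] [DecidableEq α]
  (p : β → Prop) [DecidablePred p]

theorem card_filter_forall_apply :
    #{f : α → β | ∀ i, p (f i)} = #{b | p b} ^ Fintype.card α := by
  have hpi : ({f : α → β | ∀ i, p (f i)} : Finset (α → β)) =
      Fintype.piFinset fun _ => ({b | p b} : Finset β) := by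
    ext f
    simp [Fintype.mem_piFinset]
  rw [hpi, Fintype.card_piFinset, prod_const, card_univ]

theorem card_filter_exists_apply_div [Nonempty β]
    [DecidablePred fun f : α → β => ∃ i, p (f i)] :
    (#{f : α → β | ∃ i, p (f i)} : ℝ) / Fintype.card (α → β) =
      1 - (1 - (#{b | p b} : ℝ) / Fintype.card β) ^ Fintype.card α := by
  have hsplit_univ := card_filter_add_card_filter_not (s := (univ : Finset β)) p
  have hsplit_pi := card_filter_add_card_filter_not (s := (univ : Finset (α → β)))
    fun f => ∃ i, p (f i)
  simp only [not_exists, card_univ] at hsplit_pi hsplit_univ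
  rw [card_filter_forall_apply (fun b => ¬ p b), Fintype.card_fun] at hsplit_pi
  have hexists : (#{f : α → β | ∃ i, p (f i)} : ℝ) =
      (Fintype.card β : ℝ) ^ Fintype.card α - (#{b | ¬ p b} : ℝ) ^ Fintype.card α := by
    rw [eq_sub_iff_add_eq]
    exact_mod_cast hsplit_pi
  have hnot : (#{b | ¬ p b} : ℝ) = Fintype.card β - #{b | p b} := by
    rw [eq_sub_iff_add_eq']
    exact_mod_cast hsplit_univ
  have hβ : (Fintype.card β : ℝ) ≠ 0 := by positivity
  rw [hexists, hnot, Fintype.card_fun, Nat.cast_pow, one_sub_div hβ, div_pow,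
    sub_div, div_self (pow_ne_zero _ hβ)]

end UniformFunctions

theorem card_filter_forall_eq_true_div (ι : Type*) [Fintype ι] [DecidableEq ι]
    [DecidablePred fun g : ι → Bool => ∀ k, g k = true] :
    (#{g : ι → Bool | ∀ k, g k = true} : ℝ) / Fintype.card (ι → Bool) =
      ((2 : ℝ) ^ Fintype.card ι)⁻¹ := by
  have hconst : ({g : ι → Bool | ∀ k, g k = true} : Finset (ι → Bool)) =
      {fun _ => true} := by
    ext g
    simp [funext_iff]
  simp [hconst]

theorem one_sub_one_sub_pow_le {R : Type*} [Ring R] [LinearOrder R] [IsStrictOrderedRing R]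
    {x : R} (hx : x ≤ 2) (n : ℕ) : 1 - (1 - x) ^ n ≤ n * x := by
  have := one_add_mul_le_pow (neg_le_neg hx) n
  rw [← sub_eq_add_neg, mul_neg, ← sub_eq_add_neg] at this
  exact sub_le_comm.mp this

theorem gww_long_teeth_failure_general (N D : ℕ) :
    ((Finset.univ.filter
        (fun f : Fin N → Fin D → Bool => ∃ i, ∀ k, f i k = true)).card : ℝ) /
        (Fintype.card (Fin N → Fin D → Bool) : ℝ)
      = 1 - (1 - ((2 : ℝ) ^ D)⁻¹) ^ N ∧
    ((Finset.univ.filter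
        (fun f : Fin N → Fin D → Bool => ∃ i, ∀ k, f i k = true)).card : ℝ) /
        (Fintype.card (Fin N → Fin D → Bool) : ℝ)
      ≤ (N : ℝ) / 2 ^ D := by
  have hprob :=
    card_filter_exists_apply_div (α := Fin N) fun g : Fin D → Bool => ∀ k, g k = true
  rw [card_filter_forall_eq_true_div, Fintype.card_fin, Fintype.card_fin] at hprob
  have hinv_le : ((2 : ℝ) ^ D)⁻¹ ≤ 2 :=
    (inv_le_one_of_one_le₀ (one_le_pow₀ one_le_two)).trans one_le_two
  refine ⟨hprob, hprob ▸ ?_⟩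
  calc 1 - (1 - ((2 : ℝ) ^ D)⁻¹) ^ N ≤ N * ((2 : ℝ) ^ D)⁻¹ :=
        one_sub_one_sub_pow_le hinv_le N
    _ = N / 2 ^ D := (div_eq_mul_inv _ _).symm

/-- Theorem 5 (GWW variant fails on the long-teeth comb): under the uniform probability
measure on functions `f : Fin N → (Fin D → Bool)` (each of `N` walkers making `D`
independent uniform binary choices), the probability that some walker follows the spine
(the all-`true` string) equals `1 - (1 - 2^{-D})^N`, which is at most `N / 2^D`. -/
theorem gww_long_teeth_failure (N D : ℕ) (hN : 1 ≤ N) (hD : 1 ≤ D) :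
    ((Finset.univ.filter
        (fun f : Fin N → Fin D → Bool => ∃ i, ∀ k, f i k = true)).card : ℝ) /
        (Fintype.card (Fin N → Fin D → Bool) : ℝ)
      = 1 - (1 - ((2 : ℝ) ^ D)⁻¹) ^ N ∧
    ((Finset.univ.filter
        (fun f : Fin N → Fin D → Bool => ∃ i, ∀ k, f i k = true)).card : ℝ) /
        (Fintype.card (Fin N → Fin D → Bool) : ℝ)
      ≤ (N : ℝ) / 2 ^ D :=
  gww_long_teeth_failure_general N D
end

section
/- (Blockwise norm conservation under Schrödinger evolution.) Let n be a natural number, S ⊆ Fin n, and H : ℝ → Matrix (Fin n) (Fin n) ℂ such that for every t, H t is Hermitian and (H t) y x = 0 whenever exactly one of x, y lies in S. Suppose ψ : ℝ → (Fin n → ℂ) satisfies, for every t, HasDerivAt ψ (-(Complex.I) • ((H t).mulVec (ψ t))) t (i.e., i·ψ' = H(t)ψ). Then the function t ↦ ∑_{x ∈ S} ‖ψ t x‖² is constant; in particular ∑_{x ∈ S} ‖ψ t x‖² = ∑_{x ∈ S} ‖ψ 0 x‖² for all t. -/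
/-!
Because `H(t)` has no entries coupling `S` with its complement, it commutes with the coordinate
projection onto `S`, so the projected state again solves the Schrödinger equation. For any solution
`ψ`, `d/dt ‖ψ‖² = 2 Re ⟪ψ, -i H ψ⟫ = 2 Im ⟪ψ, H ψ⟫`, which vanishes since `H` is Hermitian.
-/

open Matrix

section

variable {ι : Type*} [Fintype ι]

theorem hasDerivAt_sum_norm_sq {ψ : ℝ → ι → ℂ} {ψ' : ι → ℂ} {t : ℝ} (hψ : HasDerivAt ψ ψ' t) :
    HasDerivAt (fun s => ∑ x, ‖ψ s x‖ ^ 2) (2 * (star (ψ t) ⬝ᵥ ψ').re) t := by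
  refine (HasDerivAt.fun_sum fun x _ => (hasDerivAt_pi.1 hψ x).norm_sq).congr_deriv ?_
  simp only [dotProduct, Complex.re_sum, Finset.mul_sum, Complex.inner, Pi.star_apply,
    Complex.star_def, mul_comm]

theorem Matrix.IsHermitian.re_star_dotProduct_neg_I_smul_mulVec {A : Matrix ι ι ℂ}
    (hA : A.IsHermitian) (v : ι → ℂ) : (star v ⬝ᵥ (-Complex.I) • A *ᵥ v).re = 0 := by
  simpa [dotProduct_smul] using hA.im_star_dotProduct_mulVec_self v

theorem Matrix.mulVec_indicator_of_block {α : Type*} [NonUnitalNonAssocSemiring α]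
    {A : Matrix ι ι α} {S : Set ι}
    (hA : ∀ x y, (x ∈ S ∧ y ∉ S) ∨ (x ∉ S ∧ y ∈ S) → A y x = 0) (v : ι → α) :
    A *ᵥ S.indicator v = S.indicator (A *ᵥ v) := by
  classical
  ext y
  have hterm : ∀ x, A y x * S.indicator v x = if y ∈ S then A y x * v x else 0 := by
    intro x
    by_cases hx : x ∈ S <;> by_cases hy : y ∈ S <;> simp [hx, hy, hA x y]
  simp only [mulVec, dotProduct, hterm]
  simp only [Finset.sum_ite_irrel, Finset.sum_const_zero, Set.indicator_apply, mulVec, dotProduct]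

theorem sum_norm_sq_indicator {E : Type*} [SeminormedAddCommGroup E] (S : Finset ι) (v : ι → E) :
    ∑ x, ‖(S : Set ι).indicator v x‖ ^ 2 = ∑ x ∈ S, ‖v x‖ ^ 2 := by
  classical
  simp [Set.indicator_apply, apply_ite]

omit [Fintype ι] in
theorem HasDerivAt.indicator {𝕜 E : Type*} [NontriviallyNormedField 𝕜] [NormedAddCommGroup E]
    [NormedSpace 𝕜 E] {ψ : 𝕜 → ι → E} {ψ' : ι → E} {t : 𝕜} (hψ : HasDerivAt ψ ψ' t)
    (S : Set ι) : HasDerivAt (fun s => S.indicator (ψ s)) (S.indicator ψ') t := by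
  classical
  refine hasDerivAt_pi.2 fun x => ?_
  by_cases hx : x ∈ S
  · simpa [hx] using hasDerivAt_pi.1 hψ x
  · simpa [hx] using hasDerivAt_const t (0 : E)

def IsSchrodingerSolution (H : ℝ → Matrix ι ι ℂ) (ψ : ℝ → ι → ℂ) : Prop :=
  ∀ t, HasDerivAt ψ (-Complex.I • H t *ᵥ ψ t) t

namespace IsSchrodingerSolution

variable {H : ℝ → Matrix ι ι ℂ} {ψ : ℝ → ι → ℂ}

theorem sum_norm_sq_eq (hψ : IsSchrodingerSolution H ψ) (hH : ∀ t, (H t).IsHermitian)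
    (t s : ℝ) : ∑ x, ‖ψ t x‖ ^ 2 = ∑ x, ‖ψ s x‖ ^ 2 := by
  have hderiv : ∀ t, HasDerivAt (fun s => ∑ x, ‖ψ s x‖ ^ 2) 0 t := fun t => by
    simpa only [(hH t).re_star_dotProduct_neg_I_smul_mulVec, mul_zero] using
      hasDerivAt_sum_norm_sq (hψ t)
  exact is_const_of_deriv_eq_zero (fun t => (hderiv t).differentiableAt)
    (fun t => (hderiv t).deriv) t s

theorem indicator (hψ : IsSchrodingerSolution H ψ) {S : Set ι}
    (hblock : ∀ t, ∀ x y, (x ∈ S ∧ y ∉ S) ∨ (x ∉ S ∧ y ∈ S) → H t y x = 0) :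
    IsSchrodingerSolution H fun t => S.indicator (ψ t) := fun t => by
  rw [mulVec_indicator_of_block (hblock t)]
  convert (hψ t).indicator S using 1
  exact (Set.indicator_const_smul S (-Complex.I) (H t *ᵥ ψ t)).symm

end IsSchrodingerSolution

end

/-- Proposition 7 (blockwise norm conservation under Schrödinger evolution): if the
Hermitian Hamiltonian `H(t)` has no coupling between a set `S` of indices and its
complement, then Schrödinger evolution `i·ψ' = H(t)ψ` conserves the squared norm of the
component of `ψ` supported on `S`. -/
theorem block_norm_conservation (n : ℕ) (S : Finset (Fin n))
    (H : ℝ → Matrix (Fin n) (Fin n) ℂ)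
    (hherm : ∀ t, (H t).IsHermitian)
    (hblock : ∀ t, ∀ x y : Fin n, ((x ∈ S ∧ y ∉ S) ∨ (x ∉ S ∧ y ∈ S)) → H t y x = 0)
    (ψ : ℝ → Fin n → ℂ)
    (hψ : ∀ t, HasDerivAt ψ (-(Complex.I) • ((H t).mulVec (ψ t))) t) :
    ∀ t : ℝ, ∑ x ∈ S, ‖ψ t x‖ ^ 2 = ∑ x ∈ S, ‖ψ 0 x‖ ^ 2 := by
  have hproj : IsSchrodingerSolution H fun t => (S : Set (Fin n)).indicator (ψ t) :=
    IsSchrodingerSolution.indicator hψ (S := S) hblock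
  intro t
  simpa only [sum_norm_sq_indicator] using hproj.sum_norm_sq_eq hherm t 0
end

section
/- (Symmetric branch bound for quantum annealing.) Fix a real weight v > 0 and let L : Matrix (Fin 3) (Fin 3) ℂ be the (complexified) graph Laplacian of the 3-vertex star with root r = 0 and children x = 1, y = 2 with equal edge weights v: L = !![2v, -v, -v; -v, v, 0; -v, 0, v]. Let a, b : ℝ → ℝ, let W : Matrix (Fin 3) (Fin 3) ℂ be real diagonal with W₁₁ = W₂₂, and set H t = (a t) • L + (b t) • W. Suppose ψ : ℝ → (Fin 3 → ℂ) satisfies HasDerivAt ψ (-(Complex.I) • ((H t).mulVec (ψ t))) t for all t, with ψ 0 1 = 0 and ψ 0 2 = 0. Then for every t_f ≥ 0: ψ t_f 1 = ψ t_f 2, and ‖ψ t_f 1‖ ≤ ‖ψ 0 0‖ / √2. -/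
/-!
The Hamiltonian is Hermitian, so the Schrödinger flow preserves `∑ i, ‖ψ t i‖ ^ 2`. The difference
`ψ t 1 - ψ t 2` of the children's amplitudes obeys a scalar Schrödinger equation with the real
potential `a t * v + b t * W₁`, and vanishes initially, so it vanishes for all time. With equal
children, conservation gives `‖ψ t 0‖ ^ 2 + 2 * ‖ψ t 1‖ ^ 2 = ‖ψ 0 0‖ ^ 2`.
-/

open Matrix Complex

theorem norm_eq_of_hasDerivAt_neg_I_smul_isSymmetric {E : Type*} [NormedAddCommGroup E]
    [InnerProductSpace ℂ E] {T : ℝ → E →ₗ[ℂ] E}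
    (hT : ∀ t, (T t).IsSymmetric) {ψ : ℝ → E}
    (hψ : ∀ t, HasDerivAt ψ (-I • T t (ψ t)) t) (t s : ℝ) : ‖ψ t‖ = ‖ψ s‖ := by
  let _ : InnerProductSpace ℝ E := .rclikeToReal ℂ E
  -- `d/dt ‖ψ‖² = 2 Re ⟪ψ, -i T ψ⟫ = 2 Im ⟪ψ, T ψ⟫`, which vanishes as `T` is symmetric.
  have hderiv : ∀ t, HasDerivAt (‖ψ ·‖ ^ 2) 0 t := fun t ↦ by
    convert (hψ t).norm_sq using 1
    have h_real := (hT t).im_inner_self_apply (ψ t)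
    rw [RCLike.im_to_complex] at h_real
    rw [real_inner_eq_re_inner ℂ, inner_smul_right]
    simp [h_real]
  have := is_const_of_deriv_eq_zero (fun t ↦ (hderiv t).differentiableAt)
    (fun t ↦ (hderiv t).deriv) t s
  exact (sq_eq_sq₀ (norm_nonneg _) (norm_nonneg _)).mp this

theorem sum_norm_sq_eq_of_hasDerivAt_neg_I_smul_mulVec {n : Type*} [Fintype n] [DecidableEq n]
    {H : ℝ → Matrix n n ℂ} (hH : ∀ t, (H t).IsHermitian) {ψ : ℝ → n → ℂ}
    (hψ : ∀ t, HasDerivAt ψ (-I • H t *ᵥ ψ t) t) (t s : ℝ) :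
    ∑ i, ‖ψ t i‖ ^ 2 = ∑ i, ‖ψ s i‖ ^ 2 := by
  have hφ : ∀ t, HasDerivAt (fun t ↦ WithLp.toLp 2 (ψ t))
      (-I • toEuclideanLin (H t) (WithLp.toLp 2 (ψ t))) t := fun t ↦
    ((PiLp.continuousLinearEquiv 2 ℝ (fun _ : n ↦ ℂ)).symm.hasFDerivAt.comp_hasDerivAt t (hψ t) :)
  have := congrArg (· ^ 2) <| norm_eq_of_hasDerivAt_neg_I_smul_isSymmetric
    (fun t ↦ isSymmetric_toEuclideanLin_iff.mpr (hH t)) hφ t s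
  simpa only [EuclideanSpace.norm_sq_eq] using this

theorem eq_zero_of_hasDerivAt_neg_I_mul_ofReal {c : ℝ → ℝ} {f : ℝ → ℂ}
    (hf : ∀ t, HasDerivAt f (-I * c t * f t) t) (h0 : f 0 = 0) (t : ℝ) : f t = 0 := by
  have hT : ∀ t, ((c t : ℂ) • LinearMap.id : ℂ →ₗ[ℂ] ℂ).IsSymmetric := fun t ↦
    LinearMap.IsSymmetric.id.smul (conj_ofReal _)
  have := norm_eq_of_hasDerivAt_neg_I_smul_isSymmetric hT
    (fun t ↦ by simpa [mul_assoc] using hf t) t 0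
  simpa [h0] using this

theorem le_div_sqrt_two_of_two_mul_sq_le {x y : ℝ} (hy : 0 ≤ y) (h : 2 * x ^ 2 ≤ y ^ 2) :
    x ≤ y / √2 := by
  rw [← Real.sqrt_sq hy, ← Real.sqrt_div' _ zero_le_two]
  exact Real.le_sqrt_of_sq_le (by linarith)

def starLaplacian (v : ℝ) : Matrix (Fin 3) (Fin 3) ℂ :=
  !![((2 * v : ℝ) : ℂ), -(v : ℂ), -(v : ℂ);
    -(v : ℂ), (v : ℂ), 0;
    -(v : ℂ), 0, (v : ℂ)]

noncomputable def starHamiltonian (v W₀ W₁ α β : ℝ) : Matrix (Fin 3) (Fin 3) ℂ :=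
  α • starLaplacian v + β • diagonal ![(W₀ : ℂ), (W₁ : ℂ), (W₁ : ℂ)]

theorem starHamiltonian_isHermitian (v W₀ W₁ α β : ℝ) :
    (starHamiltonian v W₀ W₁ α β).IsHermitian := by
  ext i j
  fin_cases i <;> fin_cases j <;> simp [starHamiltonian, starLaplacian]

theorem starHamiltonian_mulVec_one_sub_two (v W₀ W₁ α β : ℝ) (x : Fin 3 → ℂ) :
    (starHamiltonian v W₀ W₁ α β *ᵥ x) 1 - (starHamiltonian v W₀ W₁ α β *ᵥ x) 2 =
      ((α * v + β * W₁ : ℝ) : ℂ) * (x 1 - x 2) := by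
  simp [starHamiltonian, starLaplacian, mulVec, dotProduct, Fin.sum_univ_three]
  ring

theorem symmetric_branch_bound_general (v : ℝ) (a b : ℝ → ℝ) (W₀ W₁ : ℝ)
    (ψ : ℝ → Fin 3 → ℂ)
    (hψ : ∀ t : ℝ, HasDerivAt ψ
      (-(Complex.I) •
        (((a t) • (!![((2 * v : ℝ) : ℂ), -(v : ℂ), -(v : ℂ);
              -(v : ℂ), (v : ℂ), 0;
              -(v : ℂ), 0, (v : ℂ)] : Matrix (Fin 3) (Fin 3) ℂ)
          + (b t) • (Matrix.diagonal ![((W₀ : ℝ) : ℂ), ((W₁ : ℝ) : ℂ), ((W₁ : ℝ) : ℂ)]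
              : Matrix (Fin 3) (Fin 3) ℂ)).mulVec (ψ t))) t)
    (h1 : ψ 0 1 = 0) (h2 : ψ 0 2 = 0) :
    ∀ tf : ℝ, 0 ≤ tf → ψ tf 1 = ψ tf 2 ∧ ‖ψ tf 1‖ ≤ ‖ψ 0 0‖ / Real.sqrt 2 := by
  intro tf _
  have hH (t : ℝ) : HasDerivAt ψ (-I • starHamiltonian v W₀ W₁ (a t) (b t) *ᵥ ψ t) t := hψ t
  have h_diff (t : ℝ) : HasDerivAt (fun s ↦ ψ s 1 - ψ s 2)
      (-I * (a t * v + b t * W₁ : ℝ) * (ψ t 1 - ψ t 2)) t := by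
    have h := (hasDerivAt_pi.1 (hH t) 1).sub (hasDerivAt_pi.1 (hH t) 2)
    rwa [Pi.smul_apply, Pi.smul_apply, smul_eq_mul, smul_eq_mul, ← mul_sub,
      starHamiltonian_mulVec_one_sub_two, ← mul_assoc] at h
  have h_sym : ψ tf 1 = ψ tf 2 :=
    sub_eq_zero.1 (eq_zero_of_hasDerivAt_neg_I_mul_ofReal h_diff (by simp [h1, h2]) tf)
  have h_norm := sum_norm_sq_eq_of_hasDerivAt_neg_I_smul_mulVec
    (fun t ↦ starHamiltonian_isHermitian v W₀ W₁ (a t) (b t)) hH tf 0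
  simp only [Fin.sum_univ_three, h1, h2, norm_zero, ← h_sym] at h_norm
  refine ⟨h_sym, le_div_sqrt_two_of_two_mul_sq_le (norm_nonneg _) ?_⟩
  linarith [sq_nonneg ‖ψ tf 0‖]

/-- Proposition 8 (symmetric branch bound for quantum annealing): on the 3-vertex star
with root `0` and children `1, 2` joined by equal edge weights `v`, with a real diagonal
objective symmetric under exchanging the children, Schrödinger evolution of
`H t = a t • L + b t • W` starting with no amplitude on the children keeps the children's
amplitudes equal, and each is bounded by `‖ψ 0 0‖/√2`. -/
theorem symmetric_branch_bound (v : ℝ) (hv : 0 < v) (a b : ℝ → ℝ) (W₀ W₁ : ℝ)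
    (ψ : ℝ → Fin 3 → ℂ)
    (hψ : ∀ t : ℝ, HasDerivAt ψ
      (-(Complex.I) •
        (((a t) • (!![((2 * v : ℝ) : ℂ), -(v : ℂ), -(v : ℂ);
              -(v : ℂ), (v : ℂ), 0;
              -(v : ℂ), 0, (v : ℂ)] : Matrix (Fin 3) (Fin 3) ℂ)
          + (b t) • (Matrix.diagonal ![((W₀ : ℝ) : ℂ), ((W₁ : ℝ) : ℂ), ((W₁ : ℝ) : ℂ)]
              : Matrix (Fin 3) (Fin 3) ℂ)).mulVec (ψ t))) t)
    (h1 : ψ 0 1 = 0) (h2 : ψ 0 2 = 0) :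
    ∀ tf : ℝ, 0 ≤ tf → ψ tf 1 = ψ tf 2 ∧ ‖ψ tf 1‖ ≤ ‖ψ 0 0‖ / Real.sqrt 2 :=
  symmetric_branch_bound_general v a b W₀ W₁ ψ hψ h1 h2
end

section
/- (Fleming–Viot resampling count.) Let V be a type, N ≥ 1, x : Fin N → V a configuration of N walkers, v : V, and for a configuration z let η_v(z) = card {k : Fin N | z k = v}. Then for every index i : Fin N, ∑_{j ≠ i} η_v(Function.update x i (x j)) equals N·η_v(x) if x i ≠ v, and equals N·(η_v(x) - 1) if x i = v. -/
open Finset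

/-! Moving walker `i` to a site `a` changes `∑ k, g (x k)` by `g a - g (x i)`. Over the `N - 1`
choices `a = x j`, `j ≠ i`, the gains add up to the total minus `g (x i)`, so the sum equals
`N • (∑ k, g (x k) - g (x i))`; with `g` the indicator of `v` this is the theorem. The identities
are kept additive, in any commutative monoid, so that subtraction only enters at the very end. -/

section
variable {ι V M : Type*} [Fintype ι] [DecidableEq ι] [AddCommMonoid M]

theorem sum_comp_update_add (g : V → M) (x : ι → V) (i : ι) (a : V) :
    ∑ k, g (Function.update x i a k) + g (x i) = ∑ k, g (x k) + g a := by
  have hupd : (fun k => g (Function.update x i a k)) = Function.update (g ∘ x) i (g a) :=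
    Function.comp_update g x i a
  rw [hupd, sum_update_of_mem (mem_univ i), sdiff_singleton_eq_erase,
    ← sum_erase_add univ _ (mem_univ i)]
  exact add_rotate _ _ _

theorem sum_erase_sum_comp_update_add (g : V → M) (x : ι → V) (i : ι) :
    ∑ j ∈ univ.erase i, ∑ k, g (Function.update x i (x j) k) + Fintype.card ι • g (x i)
      = Fintype.card ι • ∑ k, g (x k) := by
  have hcard : Fintype.card ι = #(univ.erase i) + 1 := by
    rw [card_erase_add_one (mem_univ i), card_univ]
  have hrest : ∑ j ∈ univ.erase i, g (x j) + g (x i) = ∑ k, g (x k) :=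
    sum_erase_add univ (g ∘ x) (mem_univ i)
  calc ∑ j ∈ univ.erase i, ∑ k, g (Function.update x i (x j) k) + Fintype.card ι • g (x i)
      = ∑ j ∈ univ.erase i, (∑ k, g (Function.update x i (x j) k) + g (x i)) + g (x i) := by
        rw [hcard, succ_nsmul, sum_add_distrib, sum_const, add_assoc]
    _ = ∑ j ∈ univ.erase i, (∑ k, g (x k) + g (x j)) + g (x i) := by
        simp_rw [sum_comp_update_add]
    _ = Fintype.card ι • ∑ k, g (x k) := by
        rw [sum_add_distrib, sum_const, add_assoc, hrest, hcard, succ_nsmul]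
end

theorem fleming_viot_resampling_count_general {V : Type*} [DecidableEq V] (N : ℕ)
    (x : Fin N → V) (v : V) (i : Fin N) :
    ∑ j ∈ Finset.univ.erase i,
        (Finset.univ.filter (fun k : Fin N => Function.update x i (x j) k = v)).card
      = if x i = v
          then N * ((Finset.univ.filter (fun k : Fin N => x k = v)).card - 1)
          else N * (Finset.univ.filter (fun k : Fin N => x k = v)).card := by
  have key := sum_erase_sum_comp_update_add (fun a => if a = v then 1 else 0) x i
  simp only [← card_filter, Fintype.card_fin, smul_eq_mul] at key
  split_ifs at key ⊢ with hv
  · rw [Nat.mul_sub_one]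
    omega
  · simpa using key

/-- Fleming–Viot resampling count (Appendix A.2): for a configuration `x` of `N` walkers,
with `η_v(z)` the number of walkers of `z` at site `v`, summing the count after moving
walker `i` to the site of walker `j` over the `N-1` indices `j ≠ i` gives `N·η_v(x)` when
`x i ≠ v`, and `N·(η_v(x) - 1)` when `x i = v`. -/
theorem fleming_viot_resampling_count {V : Type*} [DecidableEq V] (N : ℕ) (hN : 1 ≤ N)
    (x : Fin N → V) (v : V) (i : Fin N) :
    ∑ j ∈ Finset.univ.erase i,
        (Finset.univ.filter (fun k : Fin N => Function.update x i (x j) k = v)).card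
      = if x i = v
          then N * ((Finset.univ.filter (fun k : Fin N => x k = v)).card - 1)
          else N * (Finset.univ.filter (fun k : Fin N => x k = v)).card :=
  fleming_viot_resampling_count_general N x v i
end
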